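/- Let (Ω, ℙ) be a probability space, let Q̂ and Ẑ be real random variables with Ẑ(ω) ≠ 0 for almost every ω, and let Q ∈ ℝ and Z ∈ ℝ with Z ≠ 0. Then E[(Q/Z − Q̂/Ẑ)²] ≤ (2/Z²) · ( E[(Q̂ − Q)²] + ‖Q̂/Ẑ‖_{L⁴}² · ‖Ẑ − Z‖_{L⁴}² ), where ‖X‖_{L⁴} = (E[|X|⁴])^{1/4}; in particular the inequality holds whenever the right-hand side is finite. -/

import Mathlib

/-!
Writing `Q / Z - Q̂ / Ẑ = ((Q - Q̂) + (Q̂ / Ẑ) (Ẑ - Z)) / Z`, the bound `(a + b)² ≤ 2 (a² + b²)`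
splits the error pointwise into the numerator error and the product `(Q̂ / Ẑ) (Ẑ - Z)`, whose
second moment is controlled by Hölder's inequality with exponents `4, 4 ↦ 2`.
-/

open MeasureTheory

lemma sq_div_sub_div_le {Q Z q z : ℝ} (hZ : Z ≠ 0) (hz : z ≠ 0) :
    (Q / Z - q / z) ^ 2 ≤ 2 / Z ^ 2 * ((q - Q) ^ 2 + (q / z * (z - Z)) ^ 2) := by
  have hsplit : Q / Z - q / z = ((Q - q) + q / z * (z - Z)) / Z := by
    field_simp
    ring
  calc (Q / Z - q / z) ^ 2 = ((Q - q) + q / z * (z - Z)) ^ 2 / Z ^ 2 := by rw [hsplit, div_pow]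
    _ ≤ 2 * ((Q - q) ^ 2 + (q / z * (z - Z)) ^ 2) / Z ^ 2 := by gcongr; exact add_sq_le
    _ = 2 / Z ^ 2 * ((q - Q) ^ 2 + (q / z * (z - Z)) ^ 2) := by ring

section

variable {α : Type*} [MeasurableSpace α] (μ : Measure α)

lemma lintegral_ofReal_sq_eq_eLpNorm_sq (f : α → ℝ) :
    ∫⁻ x, ENNReal.ofReal (f x ^ 2) ∂μ = eLpNorm f 2 μ ^ 2 := by
  have h := eLpNorm_nnreal_pow_eq_lintegral (f := f) (μ := μ) (p := 2) two_ne_zero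
  norm_num at h
  rw [h]
  congr 1
  ext x
  rw [Real.enorm_eq_ofReal_abs, ← ENNReal.ofReal_pow (abs_nonneg _), sq_abs]

lemma ENNReal.holderTriple_four_four_two : ENNReal.HolderTriple 4 4 2 := by
  rw [ENNReal.holderTriple_iff, ← two_mul, show (4 : ENNReal) = 2 * 2 by norm_num,
    ENNReal.mul_inv (by simp) (by simp), ← mul_assoc, ENNReal.mul_inv_cancel (by simp) (by simp),
    one_mul]

lemma lintegral_ofReal_sq_mul_le {f g : α → ℝ} (hf : AEStronglyMeasurable f μ)
    (hg : AEStronglyMeasurable g μ) :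
    ∫⁻ x, ENNReal.ofReal ((f x * g x) ^ 2) ∂μ ≤ eLpNorm f 4 μ ^ 2 * eLpNorm g 4 μ ^ 2 := by
  have holder : eLpNorm (f • g) 2 μ ≤ eLpNorm f 4 μ * eLpNorm g 4 μ :=
    eLpNorm_smul_le_mul_eLpNorm hg hf (hpqr := ENNReal.holderTriple_four_four_two)
  calc ∫⁻ x, ENNReal.ofReal ((f x * g x) ^ 2) ∂μ = eLpNorm (f • g) 2 μ ^ 2 :=
        lintegral_ofReal_sq_eq_eLpNorm_sq μ (f • g)
    _ ≤ (eLpNorm f 4 μ * eLpNorm g 4 μ) ^ 2 := by gcongr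
    _ = eLpNorm f 4 μ ^ 2 * eLpNorm g 4 μ ^ 2 := mul_pow _ _ _

end

theorem statement10_general {Ω : Type*} [MeasurableSpace Ω] (P : Measure Ω)
    (Qhat Zhat : Ω → ℝ)
    (hQm : Measurable Qhat) (hZm : Measurable Zhat)
    (hZne : ∀ᵐ ω ∂P, Zhat ω ≠ 0)
    (Q Z : ℝ) (hZ : Z ≠ 0) :
    ∫⁻ ω, ENNReal.ofReal ((Q / Z - Qhat ω / Zhat ω) ^ 2) ∂P
      ≤ ENNReal.ofReal (2 / Z ^ 2) *
        (∫⁻ ω, ENNReal.ofReal ((Qhat ω - Q) ^ 2) ∂P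
          + (eLpNorm (fun ω => Qhat ω / Zhat ω) 4 P) ^ 2
            * (eLpNorm (fun ω => Zhat ω - Z) 4 P) ^ 2) := by
  have hpointwise : ∀ᵐ ω ∂P, ENNReal.ofReal ((Q / Z - Qhat ω / Zhat ω) ^ 2)
      ≤ ENNReal.ofReal (2 / Z ^ 2) * (ENNReal.ofReal ((Qhat ω - Q) ^ 2)
        + ENNReal.ofReal ((Qhat ω / Zhat ω * (Zhat ω - Z)) ^ 2)) := by
    filter_upwards [hZne] with ω hzω
    rw [← ENNReal.ofReal_add (by positivity) (by positivity),
      ← ENNReal.ofReal_mul (by positivity)]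
    exact ENNReal.ofReal_le_ofReal (sq_div_sub_div_le hZ hzω)
  calc _ ≤ ∫⁻ ω, ENNReal.ofReal (2 / Z ^ 2) * (ENNReal.ofReal ((Qhat ω - Q) ^ 2)
          + ENNReal.ofReal ((Qhat ω / Zhat ω * (Zhat ω - Z)) ^ 2)) ∂P := lintegral_mono_ae hpointwise
    _ = ENNReal.ofReal (2 / Z ^ 2) * (∫⁻ ω, ENNReal.ofReal ((Qhat ω - Q) ^ 2) ∂P
          + ∫⁻ ω, ENNReal.ofReal ((Qhat ω / Zhat ω * (Zhat ω - Z)) ^ 2) ∂P) := by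
        rw [lintegral_const_mul' _ _ ENNReal.ofReal_ne_top, lintegral_add_left (by fun_prop)]
    _ ≤ _ := by
        gcongr
        exact lintegral_ofReal_sq_mul_le P (hQm.div hZm).aestronglyMeasurable
          (hZm.sub_const Z).aestronglyMeasurable

/-- Mean square error bound for the ratio estimator via Cauchy–Schwarz:
`E[(Q/Z − Q̂/Ẑ)²] ≤ (2/Z²)(E[(Q̂ − Q)²] + ‖Q̂/Ẑ‖_{L⁴}² ‖Ẑ − Z‖_{L⁴}²)`. -/
theorem statement10 {Ω : Type*} [MeasurableSpace Ω] (P : Measure Ω)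
    [IsProbabilityMeasure P] (Qhat Zhat : Ω → ℝ)
    (hQm : Measurable Qhat) (hZm : Measurable Zhat)
    (hZne : ∀ᵐ ω ∂P, Zhat ω ≠ 0)
    (Q Z : ℝ) (hZ : Z ≠ 0) :
    ∫⁻ ω, ENNReal.ofReal ((Q / Z - Qhat ω / Zhat ω) ^ 2) ∂P
      ≤ ENNReal.ofReal (2 / Z ^ 2) *
        (∫⁻ ω, ENNReal.ofReal ((Qhat ω - Q) ^ 2) ∂P
          + (eLpNorm (fun ω => Qhat ω / Zhat ω) 4 P) ^ 2
            * (eLpNorm (fun ω => Zhat ω - Z) 4 P) ^ 2) :=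
  statement10_general P Qhat Zhat hQm hZm hZne Q Z hZ
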